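/- arXiv:1305.3235 — 2 statements merged into one kernel-verified Lean document; each statement's English description precedes it below -/
import Mathlib

section
/- Let Σ and Σ̂ be p×p real symmetric positive semidefinite matrices, let r ∈ {1,…,p−1}, and let σ₁(Σ) ≥ ⋯ ≥ σ_p(Σ) denote the eigenvalues of Σ in nonincreasing order. Suppose V ∈ O(p,r) is a matrix whose columns are orthonormal eigenvectors of Σ associated with its r largest eigenvalues σ₁(Σ),…,σ_r(Σ), and V̂ ∈ O(p,r) is a matrix whose columns are orthonormal eigenvectors of Σ̂ associated with its r largest eigenvalues. Then ‖Σ̂ − Σ‖ ≥ (1/2)·( σ_r(Σ) − σ_{r+1}(Σ) )·‖V̂ V̂' − V V'‖. -/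
open Matrix

/-- The spectral norm (largest singular value) of a real matrix. -/
noncomputable def specNorm {m n : Type*} [Fintype m] [Fintype n] [DecidableEq n]
    (A : Matrix m n ℝ) : ℝ :=
  ‖LinearMap.toContinuousLinearMap (Matrix.toEuclideanLin A)‖

/-!
Write `P = V Vᵀ`, `P̂ = V̂ V̂ᵀ`, `ε = ‖Ŝ - S‖` and `δ = σ_r(S) - σ_{r+1}(S)`.
Applied to a vector, the two terms of `P̂ - P = (1 - P) P̂ - P (1 - P̂)` are orthogonal, so
`‖P̂ - P‖ ≤ m := max ‖(1 - P) P̂‖ ‖(1 - P̂) P‖`. Each term is a sin θ quantity: with `N` the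
inverse of `Ŝ` on the range of `P̂`, the identity
`(1 - P) P̂ = (1 - P) (Ŝ - S) N + S (1 - P) ((1 - P) P̂) N` gives
`(σ_r(Ŝ) - σ_{r+1}(S)) ‖(1 - P) P̂‖ ≤ ε`, and Weyl's inequality `σ_r(Ŝ) ≥ σ_r(S) - ε` turns this
mixed gap into `δ - ε`. Hence `(δ - ε) m ≤ ε`, and since `m ≤ 1`, `δ m ≤ ε + ε m ≤ 2 ε`.
-/

open scoped Matrix.Norms.L2Operator InnerProductSpace

lemma sin_theta_identity {R : Type*} [Ring R] {Q P S S' N : R} (hQ : Q * Q = Q)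
    (hQS : Q * S = S * Q) (hS'N : S' * N = P) (hPN : P * N = N) :
    Q * P = Q * (S' - S) * N + S * Q * (Q * P) * N := by
  have h : S * Q * (Q * P) * N = Q * S * N :=
    calc S * Q * (Q * P) * N = S * (Q * Q) * (P * N) := by simp only [mul_assoc]
      _ = Q * S * N := by rw [hQ, hPN, hQS]
  rw [h, mul_sub, sub_mul, mul_assoc Q S', hS'N, sub_add_cancel]

lemma sub_mul_norm_le_of_eq_add_mul {R : Type*} [NormedRing R] {T X Y N : R} {ε β γ : ℝ}
    (hβ : 0 < β) (hT : T = X * N + Y * T * N) (hX : ‖X‖ ≤ ε) (hY : ‖Y‖ ≤ γ) (hN : ‖N‖ ≤ β⁻¹) :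
    (β - γ) * ‖T‖ ≤ ε := by
  have hε : 0 ≤ ε := (norm_nonneg _).trans hX
  have hγ : 0 ≤ γ := (norm_nonneg _).trans hY
  have h : ‖T‖ ≤ ε * β⁻¹ + γ * ‖T‖ * β⁻¹ :=
    calc ‖T‖ ≤ ‖X‖ * ‖N‖ + ‖Y‖ * ‖T‖ * ‖N‖ := by
          conv_lhs => rw [hT]
          exact (norm_add_le _ _).trans
            (add_le_add (norm_mul_le _ _) ((norm_mul_le _ _).trans
              (mul_le_mul_of_nonneg_right (norm_mul_le _ _) (norm_nonneg _))))
      _ ≤ ε * β⁻¹ + γ * ‖T‖ * β⁻¹ := by gcongr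
  have hβ' : β * (ε * β⁻¹ + γ * ‖T‖ * β⁻¹) = ε + γ * ‖T‖ := by field_simp
  linarith [mul_le_mul_of_nonneg_left h hβ.le]

namespace ContinuousLinearMap

variable {𝕜 E : Type*} [RCLike 𝕜] [NormedAddCommGroup E] [InnerProductSpace 𝕜 E] [CompleteSpace E]
  {p q : E →L[𝕜] E}

lemma inner_one_sub_apply_apply_eq_zero (hp : IsStarProjection p) (x y : E) :
    ⟪(1 - p) x, p y⟫_𝕜 = 0 := by
  calc ⟪(1 - p) x, p y⟫_𝕜 = ⟪(1 - p) x, adjoint p y⟫_𝕜 := by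
        rw [← star_eq_adjoint, hp.isSelfAdjoint.star_eq]
    _ = ⟪(p * (1 - p)) x, y⟫_𝕜 := adjoint_inner_right _ _ _
    _ = 0 := by simp [hp.mul_one_sub_self]

lemma norm_sub_le_max_of_isStarProjection (hp : IsStarProjection p) (hq : IsStarProjection q) :
    ‖q - p‖ ≤ max ‖(1 - p) * q‖ ‖(1 - q) * p‖ := by
  set m := max ‖(1 - p) * q‖ ‖(1 - q) * p‖
  have hm : 0 ≤ m := (norm_nonneg _).trans (le_max_left _ _)
  refine opNorm_le_bound _ hm fun x => ?_
  have hpq : ‖p * (1 - q)‖ = ‖(1 - q) * p‖ := by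
    rw [← norm_star, star_mul, hp.isSelfAdjoint.star_eq, hq.one_sub.isSelfAdjoint.star_eq]
  have hu : ‖(1 - p) (q x)‖ ≤ m * ‖q x‖ :=
    calc ‖(1 - p) (q x)‖ = ‖((1 - p) * q) (q x)‖ := by
          rw [mul_apply_eq_comp, ← mul_apply_eq_comp q q, hq.isIdempotentElem.eq]
      _ ≤ ‖(1 - p) * q‖ * ‖q x‖ := le_opNorm _ _
      _ ≤ m * ‖q x‖ := by gcongr; exact le_max_left _ _
  have hv : ‖p ((1 - q) x)‖ ≤ m * ‖(1 - q) x‖ :=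
    calc ‖p ((1 - q) x)‖ = ‖(p * (1 - q)) ((1 - q) x)‖ := by
          rw [mul_apply_eq_comp, ← mul_apply_eq_comp (1 - q) (1 - q),
            hq.one_sub.isIdempotentElem.eq]
      _ ≤ ‖p * (1 - q)‖ * ‖(1 - q) x‖ := le_opNorm _ _
      _ ≤ m * ‖(1 - q) x‖ := by rw [hpq]; gcongr; exact le_max_right _ _
  have hsplit : (q - p) x = (1 - p) (q x) + -p ((1 - q) x) := by
    rw [show q - p = (1 - p) * q + -(p * (1 - q)) by noncomm_ring]; rfl
  have hx : ‖x‖ * ‖x‖ = ‖q x‖ * ‖q x‖ + ‖(1 - q) x‖ * ‖(1 - q) x‖ := by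
    rw [← norm_add_sq_eq_norm_sq_add_norm_sq_of_inner_eq_zero (𝕜 := 𝕜)]
    · simp
    · rw [inner_eq_zero_symm]; exact inner_one_sub_apply_apply_eq_zero hq x x
  rw [mul_self_le_mul_self_iff (norm_nonneg _) (by positivity), hsplit,
    norm_add_sq_eq_norm_sq_add_norm_sq_of_inner_eq_zero (𝕜 := 𝕜), norm_neg]
  · calc _ ≤ (m * ‖q x‖) * (m * ‖q x‖) + (m * ‖(1 - q) x‖) * (m * ‖(1 - q) x‖) := by
          gcongr
      _ = (m * ‖x‖) * (m * ‖x‖) := by linear_combination (m * m) * hx.symm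
  · rw [inner_neg_right, inner_one_sub_apply_apply_eq_zero hp, neg_zero]

end ContinuousLinearMap

namespace Matrix

variable {n : Type*} [Fintype n]

lemma specNorm_eq_l2_opNorm [DecidableEq n] (A : Matrix n n ℝ) : specNorm A = ‖A‖ := rfl

lemma l2_opNorm_sub_le_max_of_isStarProjection {𝕜 : Type*} [RCLike 𝕜] [DecidableEq n]
    {P Q : Matrix n n 𝕜} (hP : IsStarProjection P) (hQ : IsStarProjection Q) :
    ‖Q - P‖ ≤ max ‖(1 - P) * Q‖ ‖(1 - Q) * P‖ := by
  simpa only [← l2_opNorm_toEuclideanCLM, map_sub, map_mul, map_one] using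
    ContinuousLinearMap.norm_sub_le_max_of_isStarProjection (hP.map (toEuclideanCLM (𝕜 := 𝕜)))
      (hQ.map (toEuclideanCLM (𝕜 := 𝕜)))

lemma submatrix_id_mul_transpose_submatrix_id {α m : Type*} [Fintype m] [CommSemiring α]
    [DecidableEq n] (W : Matrix n n α) {f : m → n} (hf : Function.Injective f) :
    W.submatrix id f * (W.submatrix id f)ᵀ = W * diagonal ((Set.range f).indicator 1) * Wᵀ := by
  classical
  ext a b
  rw [mul_apply, mul_apply]
  simp only [mul_diagonal, transpose_apply, submatrix_apply, id, Set.indicator_apply, Pi.one_apply,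
    mul_ite, mul_one, mul_zero, ite_mul, zero_mul]
  rw [← Finset.sum_filter,
    ← Finset.sum_image (f := fun i => W a i * W b i) (fun x _ y _ h => hf h)]
  congr 1
  ext; simp

lemma exists_ne_zero_mulVec_eq_zero_of_card_lt {K m : Type*} [Field K] [Fintype m]
    (A : Matrix m n K) (h : Fintype.card m < Fintype.card n) : ∃ x ≠ 0, A *ᵥ x = 0 := by
  obtain ⟨x, hx, hx0⟩ := Submodule.exists_mem_ne_zero_of_ne_bot
    (LinearMap.ker_ne_bot_of_finrank_lt (f := A.mulVecLin) (by simpa using h))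
  exact ⟨x, hx0, hx⟩

lemma exists_ne_zero_transpose_mulVec_eq_zero [LinearOrder n] {K : Type*} [Field K]
    (W V : Matrix n n K) (k : n) :
    ∃ x ≠ 0, (∀ j, k < j → (Wᵀ *ᵥ x) j = 0) ∧ ∀ j, j < k → (Vᵀ *ᵥ x) j = 0 := by
  let A : Matrix {j // j ≠ k} n K := of fun j => if (j : n) < k then Vᵀ j else Wᵀ j
  obtain ⟨x, hx0, hAx⟩ := A.exists_ne_zero_mulVec_eq_zero_of_card_lt
    (Fintype.card_subtype_lt (p := (· ≠ k)) (x := k) (by simp))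
  refine ⟨x, hx0, fun j hj => ?_, fun j hj => ?_⟩
  · simpa [A, mulVec, hj.not_gt] using congrFun hAx ⟨j, hj.ne'⟩
  · simpa [A, mulVec, hj] using congrFun hAx ⟨j, hj.ne⟩

variable [DecidableEq n]

lemma abs_dotProduct_mulVec_le (A : Matrix n n ℝ) (x : n → ℝ) :
    |x ⬝ᵥ A *ᵥ x| ≤ ‖A‖ * (x ⬝ᵥ x) := by
  set u : EuclideanSpace ℝ n := WithLp.toLp 2 x
  have hu : x ⬝ᵥ x = ‖u‖ ^ 2 := by
    rw [← real_inner_self_eq_norm_sq, EuclideanSpace.inner_eq_star_dotProduct, star_trivial]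
  calc |x ⬝ᵥ A *ᵥ x| = |⟪u, toEuclideanCLM (𝕜 := ℝ) A u⟫_ℝ| := by
        rw [inner_toEuclideanCLM]
    _ ≤ ‖u‖ * ‖toEuclideanCLM (𝕜 := ℝ) A u‖ := abs_real_inner_le_norm _ _
    _ ≤ ‖u‖ * (‖A‖ * ‖u‖) := by gcongr; exact (toEuclideanCLM (𝕜 := ℝ) A).le_opNorm u
    _ = ‖A‖ * (x ⬝ᵥ x) := by rw [hu]; ring

lemma dotProduct_conj_diagonal_mulVec (W : Matrix n n ℝ) (d x : n → ℝ) :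
    x ⬝ᵥ (W * diagonal d * Wᵀ) *ᵥ x = ∑ i, d i * (Wᵀ *ᵥ x) i ^ 2 := by
  rw [← mulVec_mulVec, ← mulVec_mulVec, dotProduct_mulVec x W, ← mulVec_transpose]
  simp only [dotProduct, mulVec_diagonal, sq]
  exact Finset.sum_congr rfl fun i _ => by ring

section Orthogonal

variable {W V : Matrix n n ℝ}

lemma mem_unitary_of_transpose_mul_self (hW : Wᵀ * W = 1) : W ∈ unitary (Matrix n n ℝ) :=
  mem_unitaryGroup_iff'.mpr hW

lemma conj_diagonal_mul_conj_diagonal (hW : Wᵀ * W = 1) (a b : n → ℝ) :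
    W * diagonal a * Wᵀ * (W * diagonal b * Wᵀ) = W * diagonal (a * b) * Wᵀ := by
  calc W * diagonal a * Wᵀ * (W * diagonal b * Wᵀ)
      = W * diagonal a * (Wᵀ * W) * diagonal b * Wᵀ := by simp only [Matrix.mul_assoc]
    _ = W * diagonal (a * b) * Wᵀ := by
      rw [hW, Matrix.mul_one, Matrix.mul_assoc W, diagonal_mul_diagonal]
      rfl

lemma conj_diagonal_one (hW : Wᵀ * W = 1) : W * diagonal 1 * Wᵀ = 1 := by
  rw [show diagonal (1 : n → ℝ) = 1 from diagonal_one, Matrix.mul_one, mul_eq_one_comm.mp hW]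

lemma l2_opNorm_conj_diagonal (hW : Wᵀ * W = 1) (d : n → ℝ) : ‖W * diagonal d * Wᵀ‖ = ‖d‖ := by
  have hU := mem_unitary_of_transpose_mul_self hW
  have hUt : Wᵀ ∈ unitary (Matrix n n ℝ) := Unitary.star_mem hU
  rw [CStarRing.norm_mul_mem_unitary _ hUt, CStarRing.norm_mem_unitary_mul _ hU, l2_opNorm_diagonal]

lemma isStarProjection_conj_diagonal_indicator (hW : Wᵀ * W = 1) (s : Set n) :
    IsStarProjection (W * diagonal (s.indicator 1) * Wᵀ) where
  isIdempotentElem := by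
    rw [IsIdempotentElem, conj_diagonal_mul_conj_diagonal hW]
    congr; ext i; by_cases hi : i ∈ s <;> simp [hi]
  isSelfAdjoint := by
    have hd : IsSelfAdjoint (diagonal (s.indicator 1 : n → ℝ)) := by
      simp [IsSelfAdjoint, star_eq_conjTranspose]
    exact hd.conjugate W

lemma one_sub_conj_diagonal_indicator (hW : Wᵀ * W = 1) (s : Set n) :
    1 - W * diagonal (s.indicator 1) * Wᵀ = W * diagonal (sᶜ.indicator 1) * Wᵀ := by
  rw [← conj_diagonal_one hW, ← Matrix.sub_mul, ← Matrix.mul_sub, diagonal_sub]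
  congr; ext i; by_cases hi : i ∈ s <;> simp [hi]

lemma dotProduct_self_eq_sum_transpose_mulVec_sq (hW : Wᵀ * W = 1) (x : n → ℝ) :
    x ⬝ᵥ x = ∑ i, (Wᵀ *ᵥ x) i ^ 2 := by
  simpa [mul_eq_one_comm.mp hW] using dotProduct_conj_diagonal_mulVec W 1 x

theorem sin_theta (hW : Wᵀ * W = 1) (hV : Vᵀ * V = 1) {s : Set n} {e f : n → ℝ} {β γ : ℝ}
    (hγ : 0 ≤ γ) (hf : ∀ i ∈ s, β ≤ f i) (he : ∀ i ∉ s, |e i| ≤ γ) :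
    (β - γ) * ‖(1 - W * diagonal (s.indicator 1) * Wᵀ) * (V * diagonal (s.indicator 1) * Vᵀ)‖ ≤
      ‖V * diagonal f * Vᵀ - W * diagonal e * Wᵀ‖ := by
  rcases le_or_gt β γ with hβγ | hγβ
  · exact (mul_nonpos_of_nonpos_of_nonneg (sub_nonpos.2 hβγ) (norm_nonneg _)).trans (norm_nonneg _)
  have hβ : 0 < β := hγ.trans_lt hγβ
  have hf₀ : ∀ i ∈ s, 0 < f i := fun i hi => hβ.trans_le (hf i hi)
  -- `V * diagonal g * Vᵀ` inverts `V * diagonal f * Vᵀ` on the range of `V * diagonal 1ₛ * Vᵀ`.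
  set g : n → ℝ := s.indicator f⁻¹
  rw [one_sub_conj_diagonal_indicator hW]
  refine sub_mul_norm_le_of_eq_add_mul hβ (N := V * diagonal g * Vᵀ)
    (sin_theta_identity (S := W * diagonal e * Wᵀ) (S' := V * diagonal f * Vᵀ) ?_ ?_ ?_ ?_)
    ?_ ?_ ?_
  · rw [conj_diagonal_mul_conj_diagonal hW]
    congr; ext i; by_cases hi : i ∈ s <;> simp [hi]
  · rw [conj_diagonal_mul_conj_diagonal hW, conj_diagonal_mul_conj_diagonal hW, mul_comm]
  · rw [conj_diagonal_mul_conj_diagonal hV]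
    congr; ext i
    by_cases hi : i ∈ s
    · simp [hi, g, (hf₀ i hi).ne']
    · simp [hi, g]
  · rw [conj_diagonal_mul_conj_diagonal hV]
    congr; ext i; by_cases hi : i ∈ s <;> simp [hi, g]
  · refine (norm_mul_le _ _).trans (mul_le_of_le_one_left (norm_nonneg _) ?_)
    exact (isStarProjection_conj_diagonal_indicator hW _).norm_le
  · rw [conj_diagonal_mul_conj_diagonal hW, l2_opNorm_conj_diagonal hW,
      pi_norm_le_iff_of_nonneg hγ]
    intro i
    by_cases hi : i ∈ s
    · simpa [hi] using hγ
    · simpa [hi] using he i hi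
  · rw [l2_opNorm_conj_diagonal hV, pi_norm_le_iff_of_nonneg (inv_nonneg.2 hβ.le)]
    intro i
    by_cases hi : i ∈ s
    · simpa [hi, g, abs_of_pos (hf₀ i hi)] using inv_anti₀ hβ (hf i hi)
    · simpa [hi, g] using hβ.le

section Weyl

variable [LinearOrder n] {d x : n → ℝ} {k : n}

lemma le_dotProduct_conj_diagonal_mulVec (hW : Wᵀ * W = 1) (hd : Antitone d)
    (hx : ∀ j, k < j → (Wᵀ *ᵥ x) j = 0) :
    d k * (x ⬝ᵥ x) ≤ x ⬝ᵥ (W * diagonal d * Wᵀ) *ᵥ x := by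
  rw [dotProduct_self_eq_sum_transpose_mulVec_sq hW, dotProduct_conj_diagonal_mulVec,
    Finset.mul_sum]
  refine Finset.sum_le_sum fun j _ => ?_
  by_cases hkj : k < j
  · simp [hx j hkj]
  · exact mul_le_mul_of_nonneg_right (hd (not_lt.1 hkj)) (sq_nonneg _)

lemma dotProduct_conj_diagonal_mulVec_le (hW : Wᵀ * W = 1) (hd : Antitone d)
    (hx : ∀ j, j < k → (Wᵀ *ᵥ x) j = 0) :
    x ⬝ᵥ (W * diagonal d * Wᵀ) *ᵥ x ≤ d k * (x ⬝ᵥ x) := by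
  rw [dotProduct_self_eq_sum_transpose_mulVec_sq hW, dotProduct_conj_diagonal_mulVec,
    Finset.mul_sum]
  refine Finset.sum_le_sum fun j _ => ?_
  by_cases hjk : j < k
  · simp [hx j hjk]
  · exact mul_le_mul_of_nonneg_right (hd (not_lt.1 hjk)) (sq_nonneg _)

theorem weyl {V : Matrix n n ℝ} {e f : n → ℝ} (hW : Wᵀ * W = 1) (hV : Vᵀ * V = 1)
    (he : Antitone e) (hf : Antitone f) (k : n) :
    e k - ‖V * diagonal f * Vᵀ - W * diagonal e * Wᵀ‖ ≤ f k := by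
  obtain ⟨x, hx0, hxW, hxV⟩ := exists_ne_zero_transpose_mulVec_eq_zero W V k
  have hx : 0 < x ⬝ᵥ x :=
    lt_of_le_of_ne (Finset.sum_nonneg fun i _ => mul_self_nonneg (x i))
      (Ne.symm (dotProduct_self_eq_zero.not.2 hx0))
  have hE := abs_le.1 (abs_dotProduct_mulVec_le (V * diagonal f * Vᵀ - W * diagonal e * Wᵀ) x)
  rw [sub_mulVec, dotProduct_sub] at hE
  have hlow := le_dotProduct_conj_diagonal_mulVec hW he hxW
  have hup := dotProduct_conj_diagonal_mulVec_le hV hf hxV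
  refine le_of_mul_le_mul_right ?_ hx
  linarith [hE.1]

end Weyl

end Orthogonal

section FirstCols

variable {p r : ℕ}

noncomputable def firstColsProj (W : Matrix (Fin p) (Fin p) ℝ) (r : ℕ) : Matrix (Fin p) (Fin p) ℝ :=
  W * diagonal ({i : Fin p | (i : ℕ) < r}.indicator 1) * Wᵀ

lemma submatrix_castLE_mul_transpose (W : Matrix (Fin p) (Fin p) ℝ) (h : r ≤ p) :
    W.submatrix id (Fin.castLE h) * (W.submatrix id (Fin.castLE h))ᵀ = firstColsProj W r := by
  rw [submatrix_id_mul_transpose_submatrix_id W (Fin.castLE_injective h), Fin.range_castLE]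
  rfl

theorem eigengap_sub_mul_max_le (hrp : r < p) {W V : Matrix (Fin p) (Fin p) ℝ}
    {e f : Fin p → ℝ} (hW : Wᵀ * W = 1) (hV : Vᵀ * V = 1) (he : Antitone e) (hf : Antitone f)
    (he₀ : ∀ i, 0 ≤ e i) (hf₀ : ∀ i, 0 ≤ f i) :
    (e ⟨r - 1, (Nat.sub_le r 1).trans_lt hrp⟩ - e ⟨r, hrp⟩ -
        ‖V * diagonal f * Vᵀ - W * diagonal e * Wᵀ‖) *
        max ‖(1 - firstColsProj W r) * firstColsProj V r‖
          ‖(1 - firstColsProj V r) * firstColsProj W r‖ ≤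
      ‖V * diagonal f * Vᵀ - W * diagonal e * Wᵀ‖ := by
  have hε := norm_sub_rev (W * diagonal e * Wᵀ) (V * diagonal f * Vᵀ)
  have hs : ∀ i : Fin p, (i : ℕ) < r → ∀ d : Fin p → ℝ, Antitone d →
      d ⟨r - 1, (Nat.sub_le r 1).trans_lt hrp⟩ ≤ d i :=
    fun i hi d hd => hd (Fin.le_iff_val_le_val.2 (Nat.le_sub_one_of_lt hi))
  have hsc : ∀ i : Fin p, ¬ (i : ℕ) < r → ∀ d : Fin p → ℝ, Antitone d → (∀ i, 0 ≤ d i) →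
      |d i| ≤ d ⟨r, hrp⟩ :=
    fun i hi d hd hd₀ => (abs_of_nonneg (hd₀ i)).trans_le
      (hd (Fin.le_iff_val_le_val.2 (not_lt.1 hi)))
  have hweyl₁ := weyl hW hV he hf ⟨r - 1, (Nat.sub_le r 1).trans_lt hrp⟩
  have hweyl₂ := hε ▸ weyl hV hW hf he ⟨r, hrp⟩
  have hsin₁ := sin_theta hW hV (he₀ _) (fun i hi => hs i hi f hf) (fun i hi => hsc i hi e he he₀)
  have hsin₂ := hε ▸
    sin_theta hV hW (hf₀ _) (fun i hi => hs i hi e he) (fun i hi => hsc i hi f hf hf₀)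
  rcases max_cases ‖(1 - firstColsProj W r) * firstColsProj V r‖
    ‖(1 - firstColsProj V r) * firstColsProj W r‖ with ⟨hmax, -⟩ | ⟨hmax, -⟩ <;> rw [hmax]
  · exact (mul_le_mul_of_nonneg_right (by linarith) (norm_nonneg _)).trans hsin₁
  · exact (mul_le_mul_of_nonneg_right (by linarith) (norm_nonneg _)).trans hsin₂

end FirstCols

end Matrix

open Matrix in
/-- A variant of the Davis–Kahan sin-theta theorem: if `V` (resp. `V̂`) collects
orthonormal eigenvectors of the symmetric PSD matrix `S` (resp. `Ŝ`) associated with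
its `r` largest eigenvalues, then
`‖Ŝ − S‖ ≥ (1/2)·(σ_r(S) − σ_{r+1}(S))·‖V̂V̂' − VV'‖`. -/
theorem sin_theta_spectral_bound (p r : ℕ) (hrp : r < p)
    (S Shat : Matrix (Fin p) (Fin p) ℝ)
    (e ehat : Fin p → ℝ) (W What : Matrix (Fin p) (Fin p) ℝ)
    (he : Antitone e) (hehat : Antitone ehat)
    (hepos : ∀ i, 0 ≤ e i) (hehatpos : ∀ i, 0 ≤ ehat i)
    (hW : Wᵀ * W = 1) (hWhat : Whatᵀ * What = 1)
    (hS : S = W * Matrix.diagonal e * Wᵀ)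
    (hShat : Shat = What * Matrix.diagonal ehat * Whatᵀ) :
    (1/2) * (e ⟨r-1, by omega⟩ - e ⟨r, hrp⟩) *
      specNorm ((What.submatrix id (Fin.castLE hrp.le)) *
          (What.submatrix id (Fin.castLE hrp.le))ᵀ
        - (W.submatrix id (Fin.castLE hrp.le)) *
          (W.submatrix id (Fin.castLE hrp.le))ᵀ) ≤
    specNorm (Shat - S) := by
  subst hS hShat
  rw [specNorm_eq_l2_opNorm, specNorm_eq_l2_opNorm, submatrix_castLE_mul_transpose,
    submatrix_castLE_mul_transpose]
  have hP : IsStarProjection (firstColsProj W r) := isStarProjection_conj_diagonal_indicator hW _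
  have hQ : IsStarProjection (firstColsProj What r) :=
    isStarProjection_conj_diagonal_indicator hWhat _
  have hgap := eigengap_sub_mul_max_le hrp hW hWhat he hehat hepos hehatpos
  have hmax := l2_opNorm_sub_le_max_of_isStarProjection hP hQ
  have hmax₁ := max_le
    ((norm_mul_le _ _).trans (mul_le_one₀ hP.one_sub.norm_le (norm_nonneg _) hQ.norm_le))
    ((norm_mul_le _ _).trans (mul_le_one₀ hQ.one_sub.norm_le (norm_nonneg _) hP.norm_le))
  have hδ : 0 ≤ e ⟨r - 1, by omega⟩ - e ⟨r, hrp⟩ := sub_nonneg.2 (he (Fin.mk_le_mk.2 (by omega)))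
  have hε := norm_nonneg (What * diagonal ehat * Whatᵀ - W * diagonal e * Wᵀ)
  nlinarith [mul_le_mul_of_nonneg_left hmax hδ, mul_le_mul_of_nonneg_left hmax₁ hε]
end

section
/- Let 1 ≤ r ≤ p and n ≥ 1 be integers, τ ≥ 1, V ∈ O(p,r), let λ₁ ≥ ⋯ ≥ λ_r > 0 with λ₁/λ_r ≤ τ, set D = diag(√λ₁,…,√λ_r), let U be any real n×r matrix, and define S₀ = (1/n)·V D U'U D V' + I_p. If ‖(1/n)·U'U − I_r‖ < 1/τ, then the l-th largest eigenvalue of S₀ is strictly greater than 1 for every l ∈ {1,…,r} and equals 1 for every l ∈ {r+1,…,p}; moreover, V V' is the orthogonal projection onto the span of the eigenvectors of S₀ with eigenvalues exceeding 1 (the rank-r principal subspace of S₀). -/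
/-!
Since `‖UᵀU/n - I‖ < 1/τ ≤ 1`, the matrix `UᵀU/n` is positive definite, and hence so is
`M = D (UᵀU/n) D`. Diagonalize `M = Q Λ Qᵀ` with `Λ` sorted decreasingly; the columns of `VQ` are
orthonormal, so they extend to an orthogonal `W`. Then
`S₀ = (VQ) Λ (VQ)ᵀ + W Wᵀ = W diag(Λ + 1, 1, …, 1) Wᵀ`, and the first `r` columns of `W`, being
those of `VQ`, span the range of `V`.
-/

open Matrix

section SpecNorm

variable {m : Type*} [Fintype m] [DecidableEq m]

theorem abs_dotProduct_mulVec_le_specNorm (E : Matrix m m ℝ) (x : m → ℝ) :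
    |x ⬝ᵥ (E *ᵥ x)| ≤ specNorm E * (x ⬝ᵥ x) := by
  set L := LinearMap.toContinuousLinearMap (toEuclideanLin E)
  have hquad : x ⬝ᵥ (E *ᵥ x) = inner ℝ (WithLp.toLp 2 x) (L (WithLp.toLp 2 x)) := by
    simp [L, EuclideanSpace.inner_eq_star_dotProduct, dotProduct_comm]
  have hsq : x ⬝ᵥ x = ‖WithLp.toLp 2 x‖ ^ 2 := by
    rw [← real_inner_self_eq_norm_sq, EuclideanSpace.inner_eq_star_dotProduct]
    simp
  rw [hquad, hsq, sq, ← mul_assoc]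
  exact (abs_real_inner_le_norm _ _).trans <| by
    rw [mul_comm]; exact mul_le_mul_of_nonneg_right (L.le_opNorm _) (norm_nonneg _)

theorem Matrix.IsHermitian.posDef_of_specNorm_sub_one_lt_one {N : Matrix m m ℝ}
    (hN : N.IsHermitian) (hclose : specNorm (N - 1) < 1) : N.PosDef := by
  refine .of_dotProduct_mulVec_pos hN fun x hx => ?_
  have hxx : 0 < x ⬝ᵥ x := by simpa using dotProduct_star_self_pos_iff.mpr hx
  have hdev := neg_le_of_abs_le (abs_dotProduct_mulVec_le_specNorm (N - 1) x)
  have hsplit : x ⬝ᵥ (N *ᵥ x) = x ⬝ᵥ x + x ⬝ᵥ ((N - 1) *ᵥ x) := by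
    rw [sub_mulVec, one_mulVec, dotProduct_sub]; ring
  rw [star_trivial, hsplit]
  nlinarith

end SpecNorm

theorem Matrix.IsHermitian.exists_antitone_diagonalization {k : ℕ}
    {M : Matrix (Fin k) (Fin k) ℝ} (hM : M.IsHermitian) :
    ∃ (Q : Matrix (Fin k) (Fin k) ℝ) (σ : Equiv.Perm (Fin k)),
      Qᵀ * Q = 1 ∧ Antitone (hM.eigenvalues ∘ σ) ∧
      M = Q * diagonal (hM.eigenvalues ∘ σ) * Qᵀ := by
  -- `eigenvalues` is the sorted `eigenvalues₀` read through an arbitrary reindexing `σ⁻¹`.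
  set σ : Equiv.Perm (Fin k) :=
    (finCongr (Fintype.card_fin k).symm).trans (Fintype.equivOfCardEq (Fintype.card_fin _))
  set P : Matrix (Fin k) (Fin k) ℝ := (hM.eigenvectorUnitary : Matrix (Fin k) (Fin k) ℝ)
  have hP : Pᵀ * P = 1 := by
    simpa [star_eq_conjTranspose] using Matrix.mem_unitaryGroup_iff'.mp hM.eigenvectorUnitary.2
  have hMP : M = P * diagonal hM.eigenvalues * Pᵀ := by
    simpa [P, Unitary.conjStarAlgAut_apply, star_eq_conjTranspose] using hM.spectral_theorem
  refine ⟨P.submatrix id σ, σ, ?_, ?_, ?_⟩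
  · rw [transpose_submatrix, ← submatrix_mul _ _ _ _ _ Function.bijective_id, hP,
      submatrix_one_equiv]
  · intro a b hab
    simpa [σ, eigenvalues] using hM.eigenvalues₀_antitone (Fin.cast_le_cast _ |>.mpr hab)
  · rw [transpose_submatrix, ← submatrix_diagonal_equiv, submatrix_mul_equiv,
      submatrix_mul_equiv, ← hMP, submatrix_id_id]

theorem Matrix.orthonormal_toLp_col_iff {m ι : Type*} [Fintype m] [DecidableEq ι] (A : Matrix m ι ℝ) :
    Orthonormal ℝ (fun i => WithLp.toLp 2 (fun k => A k i)) ↔ Aᵀ * A = 1 := by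
  rw [orthonormal_iff_ite, ← Matrix.ext_iff]
  simp [EuclideanSpace.inner_eq_star_dotProduct, mul_apply, dotProduct, one_apply, mul_comm]

theorem exists_orthogonal_submatrix_eq {m ι : Type*} [Fintype m] [DecidableEq m]
    [DecidableEq ι] (A : Matrix m ι ℝ) (hA : Aᵀ * A = 1) (f : ι ↪ m) :
    ∃ W : Matrix m m ℝ, Wᵀ * W = 1 ∧ W.submatrix id f = A := by
  set col : ι → EuclideanSpace ℝ m := fun i => WithLp.toLp 2 (fun k => A k i)
  set v : m → EuclideanSpace ℝ m := Function.extend f col 0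
  have hvf (i : ι) : v (f i) = col i := f.injective.extend_apply _ _ _
  have hv : Orthonormal ℝ ((Set.range f).domRestrict v) := by
    have : (Set.range f).domRestrict v = col ∘ (Equiv.ofInjective f f.injective).symm := by
      ext ⟨_, i, rfl⟩ : 1
      simp [hvf]
    rw [this]
    exact ((orthonormal_toLp_col_iff A).mpr hA).comp _ (Equiv.injective _)
  obtain ⟨b, hb⟩ := hv.exists_orthonormalBasis_extension_of_card_eq (by simp)
  set W : Matrix m m ℝ := (EuclideanSpace.basisFun m ℝ).toBasis.toMatrix b
  refine ⟨W, ?_, ?_⟩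
  · have hWunit := (EuclideanSpace.basisFun m ℝ).toMatrix_orthonormalBasis_mem_unitary b
    simpa [star_eq_conjTranspose] using mem_unitaryGroup_iff'.mp hWunit
  · ext k i
    simp only [W, submatrix_apply, id, Module.Basis.toMatrix_apply,
      OrthonormalBasis.coe_toBasis_repr_apply, EuclideanSpace.basisFun_repr, hb (f i) ⟨i, rfl⟩,
      hvf, col]

theorem mul_diagonal_mul_transpose_eq_submatrix {k m ι : Type*} [Fintype m] [DecidableEq m]
    [Fintype ι] [DecidableEq ι] (W : Matrix k m ℝ) (f : ι ↪ m) (d : m → ℝ)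
    (hd : ∀ x ∉ Set.range f, d x = 0) :
    W * diagonal d * Wᵀ = W.submatrix id f * diagonal (d ∘ f) * (W.submatrix id f)ᵀ := by
  ext i j
  rw [mul_apply, mul_apply]
  simp only [mul_diagonal, transpose_apply, submatrix_apply, id, Function.comp_apply]
  refine (Fintype.sum_of_injective f f.injective (fun a => W i (f a) * d (f a) * W j (f a))
    (fun x => W i x * d x * W j x) (fun x hx => ?_) (fun _ => rfl)).symm
  simp [hd x hx]

theorem antitone_dite_lt_of_nonneg {α : Type*} [Preorder α] [Zero α] {r p : ℕ} {μ : Fin r → α}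
    (hμ : Antitone μ) (hμ0 : ∀ i, 0 ≤ μ i) :
    Antitone fun i : Fin p => if h : (i : ℕ) < r then μ ⟨i, h⟩ else 0 := by
  intro a b hab
  by_cases hb : (b : ℕ) < r
  · have ha : (a : ℕ) < r := lt_of_le_of_lt hab hb
    simpa [ha, hb] using hμ (Fin.mk_le_mk.mpr hab)
  · by_cases ha : (a : ℕ) < r <;> simp [ha, hb, hμ0]

/-- Properties of the intermediate matrix `S₀ = (1/n)·V D UᵀU D Vᵀ + I_p`:
if `‖(1/n)·UᵀU − I_r‖ < 1/τ` then the `r` leading eigenvalues of `S₀` exceed `1`,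
the remaining ones equal `1`, and `VVᵀ` is the orthogonal projection onto the rank-`r`
principal subspace of `S₀` (witnessed by a sorted orthogonal eigendecomposition). -/
theorem intermediate_matrix_spectrum (p r n : ℕ) (hrp : r ≤ p)
    (tau : ℝ) (htau : 1 ≤ tau)
    (V : Matrix (Fin p) (Fin r) ℝ) (hV : Vᵀ * V = 1)
    (l : Fin r → ℝ) (hlpos : ∀ i, 0 < l i)
    (U : Matrix (Fin n) (Fin r) ℝ)
    (hU : specNorm (((n:ℝ)⁻¹) • (Uᵀ * U) - 1) < 1/tau) :
    ∃ (e : Fin p → ℝ) (W : Matrix (Fin p) (Fin p) ℝ),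
      Wᵀ * W = 1 ∧ Antitone e ∧
      ((n:ℝ)⁻¹) • (V * Matrix.diagonal (fun i => Real.sqrt (l i)) * Uᵀ * U *
          Matrix.diagonal (fun i => Real.sqrt (l i)) * Vᵀ) + 1
        = W * Matrix.diagonal e * Wᵀ ∧
      (∀ i : Fin p, (i:ℕ) < r → 1 < e i) ∧
      (∀ i : Fin p, r ≤ (i:ℕ) → e i = 1) ∧
      V * Vᵀ = (W.submatrix id (Fin.castLE hrp)) *
        (W.submatrix id (Fin.castLE hrp))ᵀ := by
  set D : Matrix (Fin r) (Fin r) ℝ := diagonal fun i => √(l i)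
  set N : Matrix (Fin r) (Fin r) ℝ := (n : ℝ)⁻¹ • (Uᵀ * U)
  have hNherm : N.IsHermitian := by
    simpa [N] using (isHermitian_conjTranspose_mul_self U).smul (IsSelfAdjoint.all (n : ℝ)⁻¹)
  have hN : N.PosDef := hNherm.posDef_of_specNorm_sub_one_lt_one
    (hU.trans_le ((div_le_one (by linarith)).mpr htau))
  have hM : (D * N * D).PosDef := by
    have hD : IsUnit D := (PosDef.diagonal fun i => Real.sqrt_pos.mpr (hlpos i)).isUnit
    simpa [D] using hN.conjTranspose_mul_mul_same (mulVec_injective_iff_isUnit.mpr hD)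
  obtain ⟨Q, σ, hQ, hμanti, hMQ⟩ := hM.isHermitian.exists_antitone_diagonalization
  set μ := hM.isHermitian.eigenvalues ∘ σ
  have hμ (i : Fin r) : 0 < μ i := hM.eigenvalues_pos _
  obtain ⟨W, hW, hWVQ⟩ := exists_orthogonal_submatrix_eq (V * Q)
    (by rw [transpose_mul, Matrix.mul_assoc, ← Matrix.mul_assoc Vᵀ, hV, Matrix.one_mul, hQ])
    (Fin.castLEEmb hrp)
  set d : Fin p → ℝ := fun i => if h : (i : ℕ) < r then μ ⟨i, h⟩ else 0
  have hWd : W * diagonal d * Wᵀ = V * Q * diagonal μ * (V * Q)ᵀ := by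
    rw [mul_diagonal_mul_transpose_eq_submatrix W (Fin.castLEEmb hrp) d
      (fun x hx => dif_neg fun h => hx ⟨⟨x, h⟩, rfl⟩), hWVQ]
    congr 3
    ext k
    simp [d]
  have hdanti : Antitone d := antitone_dite_lt_of_nonneg hμanti fun i => (hμ i).le
  refine ⟨fun i => d i + 1, W, hW, hdanti.add_const 1, ?_, fun i hi => by simp [d, hi, hμ],
    fun i hi => by simp [d, not_lt.mpr hi], ?_⟩
  · calc (n : ℝ)⁻¹ • (V * D * Uᵀ * U * D * Vᵀ) + 1 = V * (D * N * D) * Vᵀ + W * Wᵀ := by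
          simp [N, Matrix.mul_assoc, mul_eq_one_comm.mp hW]
      _ = W * diagonal (fun i => d i + 1) * Wᵀ := by
          rw [hMQ, ← diagonal_add, diagonal_one, Matrix.mul_add, Matrix.add_mul, Matrix.mul_one,
            hWd]
          simp [transpose_mul, Matrix.mul_assoc]
  · rw [show W.submatrix id (Fin.castLE hrp) = V * Q from hWVQ, transpose_mul, Matrix.mul_assoc, ← Matrix.mul_assoc Q, mul_eq_one_comm.mp hQ,
      Matrix.one_mul]
end
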